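/- For each t > 0 let m*(t) denote the unique solution in (0,1) of the equation m = tanh((1+t)·m). Then lim_{t→0⁺} m*(t)/√(3t) = 1; that is, the spontaneous magnetization of the Curie–Weiss model vanishes at the critical point with the classical critical exponent 1/2. -/

import Mathlib

/-!
Applying `artanh` to `m = tanh ((1 + t) m)` turns it into `artanh m - m = t m`. The Taylor series
`artanh m = ∑ m ^ (2k+1) / (2k+1)` gives `m³/3 ≤ artanh m - m ≤ m³ / (3 (1 - m²))`, i.e.
`3t / (1 + 3t) ≤ m² ≤ 3t`, so `m² / (3t) → 1` by squeezing.
-/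

open Real Filter Topology

theorem Real.hasSum_artanh {x : ℝ} (hx : |x| < 1) :
    HasSum (fun k : ℕ => x ^ (2 * k + 1) / (2 * k + 1)) (artanh x) := by
  obtain ⟨hx₁, hx₂⟩ := abs_lt.mp hx
  rw [artanh_eq_half_log ⟨hx₁.le, hx₂.le⟩, log_div (by linarith) (by linarith)]
  refine ((hasSum_log_sub_log_of_abs_lt_one hx).mul_left (1 / 2)).congr_fun fun k => ?_
  field_simp

theorem Real.hasSum_artanh_sub_self {x : ℝ} (hx : |x| < 1) :
    HasSum (fun k : ℕ => x ^ (2 * k + 3) / (2 * k + 3)) (artanh x - x) := by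
  have h := (hasSum_nat_add_iff' 1).mpr (hasSum_artanh hx)
  simp only [Finset.sum_range_one, mul_zero, zero_add, pow_one, CharP.cast_eq_zero,
    div_one] at h
  refine h.congr_fun fun k => ?_
  push_cast
  ring

theorem Real.cube_div_three_le_artanh_sub_self {x : ℝ} (hx₀ : 0 ≤ x) (hx₁ : x < 1) :
    x ^ 3 / 3 ≤ artanh x - x := by
  simpa using le_hasSum (hasSum_artanh_sub_self (abs_lt.mpr ⟨by linarith, hx₁⟩)) 0
    fun k _ => by positivity

theorem Real.artanh_sub_self_le {x : ℝ} (hx₀ : 0 ≤ x) (hx₁ : x < 1) :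
    artanh x - x ≤ x ^ 3 / (3 * (1 - x ^ 2)) := by
  have hx2 : x ^ 2 < 1 := by nlinarith
  -- compare termwise with the geometric series `∑ x ^ 3 / 3 * (x ^ 2) ^ k`
  have hgeom := (hasSum_geometric_of_lt_one (sq_nonneg x) hx2).mul_left (x ^ 3 / 3)
  refine (hasSum_le (fun k => ?_) (hasSum_artanh_sub_self (abs_lt.mpr ⟨by linarith, hx₁⟩))
    hgeom).trans_eq (by field_simp)
  rw [← pow_mul, mul_comm 2 k, ← mul_div_right_comm, ← pow_add, add_comm 3]
  gcongr
  linarith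

theorem curieWeiss_magnetization_sq_bounds {t m : ℝ} (hm : m ∈ Set.Ioo (0 : ℝ) 1)
    (hfix : m = tanh ((1 + t) * m)) : m ^ 2 ≤ 3 * t ∧ 3 * t ≤ m ^ 2 * (1 + 3 * t) := by
  obtain ⟨hm₀, hm₁⟩ := hm
  have htm : artanh m - m = t * m := by
    rw [congrArg artanh hfix, artanh_tanh]
    ring
  have hlow := cube_div_three_le_artanh_sub_self hm₀.le hm₁
  have hupp := artanh_sub_self_le hm₀.le hm₁
  rw [htm] at hlow hupp
  have hm2 : 0 < 1 - m ^ 2 := by nlinarith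
  rw [le_div_iff₀ (by positivity)] at hupp
  constructor <;> nlinarith

theorem curie_weiss_critical_exponent_beta
    (mstar : ℝ → ℝ)
    (hsol : ∀ t : ℝ, 0 < t →
      mstar t ∈ Set.Ioo (0 : ℝ) 1 ∧ mstar t = Real.tanh ((1 + t) * mstar t)) :
    Tendsto (fun t : ℝ => mstar t / Real.sqrt (3 * t))
      (nhdsWithin 0 (Set.Ioi 0)) (nhds 1) := by
  have hbounds : ∀ᶠ t in 𝓝[>] 0,
      1 / (1 + 3 * t) ≤ mstar t ^ 2 / (3 * t) ∧ mstar t ^ 2 / (3 * t) ≤ 1 := by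
    filter_upwards [self_mem_nhdsWithin] with t (ht : 0 < t)
    obtain ⟨hle, hge⟩ := curieWeiss_magnetization_sq_bounds (hsol t ht).1 (hsol t ht).2
    rw [div_le_div_iff₀ (by positivity) (by positivity), div_le_one (by positivity)]
    exact ⟨by linarith, hle⟩
  have hlow : Tendsto (fun t : ℝ => 1 / (1 + 3 * t)) (𝓝[>] 0) (𝓝 1) := by
    have : ContinuousAt (fun t : ℝ => 1 / (1 + 3 * t)) 0 := by fun_prop (disch := norm_num)
    simpa using this.tendsto.mono_left nhdsWithin_le_nhds
  have hratio : Tendsto (fun t => mstar t ^ 2 / (3 * t)) (𝓝[>] 0) (𝓝 1) :=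
    tendsto_of_tendsto_of_tendsto_of_le_of_le' hlow tendsto_const_nhds
      (hbounds.mono fun _ => And.left) (hbounds.mono fun _ => And.right)
  have hsqrt := hratio.sqrt
  rw [sqrt_one] at hsqrt
  refine hsqrt.congr' ?_
  filter_upwards [self_mem_nhdsWithin] with t (ht : 0 < t)
  rw [sqrt_div' _ (by positivity), sqrt_sq (hsol t ht).1.1.le]
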